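/- arXiv:2205.15374 — 2 statements merged into one kernel-verified Lean document; each statement's English description precedes it below -/
import Mathlib

section
/- If Ĝ : [0,∞)^n → Θ is measurable, w ↦ Σ_{i=1}^n w_i ℓ(Ĝ(w); y_i) is H-integrable, and Ĝ minimizes G ↦ E_{w∼H}[ Σ_{i=1}^n w_i ℓ(G(w); y_i) ] over all such measurable functions G (equivalently, attains the value E_{w∼H}[ Σ_{i=1}^n w_i ℓ(θ̂_w; y_i) ]), then Ĝ(w) = θ̂_w for H-almost every w; that is, the trained generator reproduces the bootstrap minimizer for almost every weight vector. -/
open MeasureTheory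

/-- if `Ĝ : [0,∞)^n → Θ` is measurable, `w ↦ Σᵢ wᵢ ℓ(Ĝ w; yᵢ)` is `H`-integrable,
and `Ĝ` minimizes `G ↦ E_{w∼H}[ Σᵢ wᵢ ℓ(G w; yᵢ) ]` over all such measurable generators
(equivalently, attains the value `E_{w∼H}[ Σᵢ wᵢ ℓ(θ̂_w; yᵢ) ]`), then `Ĝ w = θ̂_w` for
`H`-almost every `w`: the trained generator reproduces the bootstrap minimizer for almost
every weight vector. -/
theorem stmt_4 {𝒴 Θ : Type*} [MeasurableSpace 𝒴] [MeasurableSpace Θ]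
    (n : ℕ) (y : Fin n → 𝒴) (ℓ : Θ → 𝒴 → ℝ)
    (hℓ : ∀ i : Fin n, Measurable fun θ : Θ => ℓ θ (y i))
    (H : Measure (Fin n → ℝ)) [IsProbabilityMeasure H]
    (hH : ∀ᵐ w ∂H, ∀ i, 0 ≤ w i)
    (θhat : (Fin n → ℝ) → Θ)
    (hmin : ∀ᵐ w ∂H, ∀ θ : Θ,
      (∑ i, w i * ℓ (θhat w) (y i)) ≤ ∑ i, w i * ℓ θ (y i))
    (huniq : ∀ᵐ w ∂H, ∀ θ : Θ,
      (∑ i, w i * ℓ θ (y i)) = (∑ i, w i * ℓ (θhat w) (y i)) → θ = θhat w)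
    (hintmin : Integrable (fun w => ∑ i, w i * ℓ (θhat w) (y i)) H)
    (Ghat : (Fin n → ℝ) → Θ) (hGmeas : Measurable Ghat)
    (hGint : Integrable (fun w => ∑ i, w i * ℓ (Ghat w) (y i)) H)
    (hGopt : (∫ w, (∑ i, w i * ℓ (Ghat w) (y i)) ∂H)
      = ∫ w, (∑ i, w i * ℓ (θhat w) (y i)) ∂H) :
    ∀ᵐ w ∂H, Ghat w = θhat w := by
  set f : (Fin n → ℝ) → ℝ := fun w =>
    (∑ i, w i * ℓ (Ghat w) (y i)) - ∑ i, w i * ℓ (θhat w) (y i) with hf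
  have hnn : 0 ≤ᵐ[H] f := by
    filter_upwards [hmin] with w hw
    simpa [f, sub_nonneg] using hw (Ghat w)
  have hint : Integrable f H := hGint.sub hintmin
  have hzero : ∫ w, f w ∂H = 0 := by
    rw [integral_sub hGint hintmin, hGopt, sub_self]
  have hae : f =ᵐ[H] 0 :=
    (integral_eq_zero_iff_of_nonneg_ae hnn hint).mp hzero
  filter_upwards [hae, huniq] with w h0 hu
  exact hu (Ghat w) (by simpa [f, sub_eq_zero] using h0)
end

section
/- Suppose C_{θ,w} ∈ (0,∞) for ν-a.e. θ and that the normalizing integrals ∫_Θ p_θ^{(n),w}(X^{(n)}) π(θ) ν(dθ) and ∫_Θ p̃_θ^{(n),w}(X^{(n)}) π̃_w(θ) ν(dθ) both lie in (0, ∞). Then for ν-a.e. θ, p̃_θ^{(n),w}(X^{(n)}) π̃_w(θ) / ∫_Θ p̃_{θ'}^{(n),w}(X^{(n)}) π̃_w(θ') ν(dθ') = p_θ^{(n),w}(X^{(n)}) π(θ) / ∫_Θ p_{θ'}^{(n),w}(X^{(n)}) π(θ') ν(dθ'); that is, the weighted posterior density coincides with the posterior density computed from the mis-specified likelihood p̃_θ^{(n),w}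 and the modified prior π̃_w. -/
open MeasureTheory ENNReal

/-- suppose `C_{θ,w} ∈ (0,∞)` for `ν`-a.e. `θ` and both normalizing integrals
`∫ p_θ^{(n),w}(X) π(θ) ν(dθ)` and `∫ p̃_θ^{(n),w}(X) π̃_w(θ) ν(dθ)` lie in `(0,∞)`. Then for
`ν`-a.e. `θ`, the weighted posterior density coincides with the posterior density computed
from the mis-specified likelihood `p̃_θ^{(n),w}` and the modified prior `π̃_w`. -/
theorem stmt_9 {𝒳 Θ : Type*} [MeasurableSpace 𝒳] [MeasurableSpace Θ]
    (μ : Measure 𝒳) [SigmaFinite μ] (ν : Measure Θ) [SigmaFinite ν]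
    (p : Θ → 𝒳 → ℝ≥0∞) (θ₀ : Θ)
    (hpmeas : ∀ θ, Measurable (p θ)) (hpdens : ∀ θ, ∫⁻ x, p θ x ∂μ = 1)
    (hp₀pos : ∀ᵐ x ∂μ, 0 < p θ₀ x)
    (n : ℕ) (X : Fin n → 𝒳) (w : Fin n → ℝ) (hw : ∀ i, 0 ≤ w i)
    (π : Θ → ℝ≥0∞) (hπmeas : Measurable π) (hπdens : ∫⁻ θ, π θ ∂ν = 1)
    -- the normalizing constant C_{θ,w} of the exponentially tilted likelihood
    (C : Θ → ℝ≥0∞)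
    (hC : ∀ θ, C θ = ∫⁻ x : Fin n → 𝒳,
      ∏ i, (p θ₀ (x i)) ^ ((1 : ℝ) - w i) * (p θ (x i)) ^ (w i)
        ∂(Measure.pi fun _ : Fin n => μ))
    (hCfin : ∀ᵐ θ ∂ν, 0 < C θ ∧ C θ < ⊤)
    (hCπ : 0 < ∫⁻ θ, C θ * π θ ∂ν) (hCπ' : ∫⁻ θ, C θ * π θ ∂ν < ⊤)
    -- the weighted likelihood p_θ^{(n),w}(X)
    (lik : Θ → ℝ≥0∞) (hlik : ∀ θ, lik θ = ∏ i, (p θ (X i)) ^ (w i))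
    -- the mis-specified likelihood p̃_θ^{(n),w}(X)
    (ptilde : Θ → ℝ≥0∞)
    (hptilde : ∀ θ, ptilde θ
      = (C θ)⁻¹ * ∏ i, (p θ₀ (X i)) ^ ((1 : ℝ) - w i) * (p θ (X i)) ^ (w i))
    -- the modified prior density π̃_w
    (πtilde : Θ → ℝ≥0∞)
    (hπtilde : ∀ θ, πtilde θ = C θ * π θ / ∫⁻ θ', C θ' * π θ' ∂ν)
    (hnorm : 0 < ∫⁻ θ, lik θ * π θ ∂ν) (hnorm' : ∫⁻ θ, lik θ * π θ ∂ν < ⊤)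
    (hnormt : 0 < ∫⁻ θ, ptilde θ * πtilde θ ∂ν)
    (hnormt' : ∫⁻ θ, ptilde θ * πtilde θ ∂ν < ⊤) :
    ∀ᵐ θ ∂ν,
      ptilde θ * πtilde θ / (∫⁻ θ', ptilde θ' * πtilde θ' ∂ν)
        = lik θ * π θ / (∫⁻ θ', lik θ' * π θ' ∂ν) := by
  set K : ℝ≥0∞ := ∏ i, (p θ₀ (X i)) ^ ((1 : ℝ) - w i) with hK
  set Z : ℝ≥0∞ := ∫⁻ θ', C θ' * π θ' ∂ν with hZ
  set L : ℝ≥0∞ := ∫⁻ θ', lik θ' * π θ' ∂ν with hL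
  have hZ0 : Z ≠ 0 := hCπ.ne'
  have hZtop : Z ≠ ⊤ := hCπ'.ne
  have hZinv0 : Z⁻¹ ≠ 0 := ENNReal.inv_ne_zero.mpr hZtop
  have hZinvtop : Z⁻¹ ≠ ⊤ := ENNReal.inv_ne_top.mpr hZ0
  have key : ∀ᵐ θ ∂ν, ptilde θ * πtilde θ = (K * Z⁻¹) * (lik θ * π θ) := by
    filter_upwards [hCfin] with θ hθ
    have hc : (C θ)⁻¹ * C θ = 1 := ENNReal.inv_mul_cancel hθ.1.ne' hθ.2.ne
    rw [hptilde, hπtilde, hlik, Finset.prod_mul_distrib, div_eq_mul_inv]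
    calc (C θ)⁻¹ * (K * ∏ i, p θ (X i) ^ w i) * (C θ * π θ * Z⁻¹)
        = ((C θ)⁻¹ * C θ) * (K * Z⁻¹ * ((∏ i, p θ (X i) ^ w i) * π θ)) := by ring
      _ = K * Z⁻¹ * ((∏ i, p θ (X i) ^ w i) * π θ) := by rw [hc, one_mul]
  have hle : (K * Z⁻¹) * L ≤ ∫⁻ θ, ptilde θ * πtilde θ ∂ν := by
    rw [lintegral_congr_ae key]
    exact lintegral_const_mul_le _ _
  have hKtop : K ≠ ⊤ := by
    intro h
    apply hnormt'.ne
    refine top_le_iff.mp (le_trans (le_of_eq ?_) hle)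
    rw [h, ENNReal.top_mul hZinv0, ENNReal.top_mul hnorm.ne']
  have hT : ∫⁻ θ, ptilde θ * πtilde θ ∂ν = (K * Z⁻¹) * L := by
    rw [lintegral_congr_ae key,
      lintegral_const_mul' _ _ (ENNReal.mul_ne_top hKtop hZinvtop)]
  have hK0 : K ≠ 0 := by
    intro h
    apply hnormt.ne'
    rw [hT, h, zero_mul, zero_mul]
  have hKZ0 : K * Z⁻¹ ≠ 0 := mul_ne_zero hK0 hZinv0
  have hKZtop : K * Z⁻¹ ≠ ⊤ := ENNReal.mul_ne_top hKtop hZinvtop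
  filter_upwards [key] with θ hθ
  rw [hθ, hT, ENNReal.mul_div_mul_left _ _ hKZ0 hKZtop]
end
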